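/- arXiv:1411.7324 — 2 statements merged into one kernel-verified Lean document; each statement's English description precedes it below -/
import Mathlib

section
/- Let μ and π be probability distributions on a finite alphabet with full support and μ ≠ π, and let k ≥ 1 be a natural number. Then η_k(μ‖π) := inf over full-support probability distributions p of [k·D(μ‖p) + D(π‖p)] is strictly positive. -/
/-!
Let `m = (k μ + π) / (k + 1)`. Splitting `log (μ/p) = log (μ/m) + log (m/p)` (and likewise
for `π`) gives, for every full-support `p`, the compensation identity
`k D(μ‖p) + D(π‖p) = k D(μ‖m) + D(π‖m) + (k + 1) D(m‖p)`.
By Gibbs' inequality the last term is nonnegative, so the infimum is at least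
`k D(μ‖m) + D(π‖m)`, which is positive because `m ≠ μ` when `μ ≠ π`.
-/
open Finset
open scoped Classical

/-- `p` is a probability mass function on the finite alphabet `Y`. -/
def IsPMF {Y : Type*} [Fintype Y] (p : Y → ℝ) : Prop :=
  (∀ y, 0 ≤ p y) ∧ ∑ y, p y = 1

/-- Relative entropy (KL divergence), with the convention `0 log 0 = 0`
(automatic since `0 * log _ = 0` in `ℝ`). -/
noncomputable def KL {Y : Type*} [Fintype Y] (p q : Y → ℝ) : ℝ :=
  ∑ y, p y * Real.log (p y / q y)

section Gibbs

lemma sub_lt_mul_log_div {a b : ℝ} (ha : 0 ≤ a) (hb : 0 < b) (hab : a ≠ b) :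
    a - b < a * Real.log (a / b) := by
  rcases ha.eq_or_lt with rfl | ha
  · simpa using hb
  have hlog : Real.log (b / a) < b / a - 1 :=
    Real.log_lt_sub_one_of_pos (div_pos hb ha) fun h =>
      hab ((div_eq_one_iff_eq ha.ne').mp h).symm
  calc a - b = -(a * (b / a - 1)) := by field_simp; ring
    _ < -(a * Real.log (b / a)) := neg_lt_neg (mul_lt_mul_of_pos_left hlog ha)
    _ = a * Real.log (a / b) := by rw [← inv_div b a, Real.log_inv, mul_neg]

lemma sub_le_mul_log_div {a b : ℝ} (ha : 0 ≤ a) (hb : 0 < b) :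
    a - b ≤ a * Real.log (a / b) := by
  rcases eq_or_ne a b with rfl | hab
  · simp
  · exact (sub_lt_mul_log_div ha hb hab).le

variable {Y : Type*} [Fintype Y] {p q : Y → ℝ}

lemma sum_sub_eq_zero_of_isPMF (hp : IsPMF p) (hq : IsPMF q) : ∑ y, (p y - q y) = 0 := by
  rw [sum_sub_distrib, hp.2, hq.2, sub_self]

lemma KL_nonneg (hp : IsPMF p) (hq : IsPMF q) (hqpos : ∀ y, 0 < q y) : 0 ≤ KL p q :=
  (sum_sub_eq_zero_of_isPMF hp hq).symm.trans_le <|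
    sum_le_sum fun y _ => sub_le_mul_log_div (hp.1 y) (hqpos y)

lemma KL_pos (hp : IsPMF p) (hq : IsPMF q) (hqpos : ∀ y, 0 < q y) (hne : p ≠ q) :
    0 < KL p q := by
  obtain ⟨y₀, hy₀⟩ := Function.ne_iff.mp hne
  exact (sum_sub_eq_zero_of_isPMF hp hq).symm.trans_lt <|
    sum_lt_sum (fun y _ => sub_le_mul_log_div (hp.1 y) (hqpos y))
      ⟨y₀, mem_univ _, sub_lt_mul_log_div (hp.1 y₀) (hqpos y₀) hy₀⟩

end Gibbs

section Mixture

variable {Y : Type*} {a b : ℝ} {μ π : Y → ℝ}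

noncomputable def mixture (a b : ℝ) (μ π : Y → ℝ) : Y → ℝ :=
  fun y => (a * μ y + b * π y) / (a + b)

lemma add_mul_mixture (hab : a + b ≠ 0) (y : Y) :
    (a + b) * mixture a b μ π y = a * μ y + b * π y :=
  mul_div_cancel₀ _ hab

lemma mixture_pos (ha : 0 ≤ a) (hb : 0 ≤ b) (hab : 0 < a + b)
    (hμ : ∀ y, 0 < μ y) (hπ : ∀ y, 0 < π y) (y : Y) : 0 < mixture a b μ π y := by
  refine div_pos ?_ hab
  rcases ha.eq_or_lt with rfl | ha
  · simpa using mul_pos (by simpa using hab) (hπ y)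
  · exact add_pos_of_pos_of_nonneg (mul_pos ha (hμ y)) (mul_nonneg hb (hπ y).le)

lemma isPMF_mixture [Fintype Y] (ha : 0 ≤ a) (hb : 0 ≤ b) (hab : 0 < a + b)
    (hμ : IsPMF μ) (hπ : IsPMF π) : IsPMF (mixture a b μ π) := by
  refine ⟨fun y => div_nonneg (add_nonneg (mul_nonneg ha (hμ.1 y)) (mul_nonneg hb (hπ.1 y)))
    hab.le, ?_⟩
  simp only [mixture, ← sum_div, sum_add_distrib, ← mul_sum, hμ.2, hπ.2, mul_one]
  exact div_self hab.ne'

lemma ne_mixture_left (hb : b ≠ 0) (hab : a + b ≠ 0) (hne : μ ≠ π) :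
    μ ≠ mixture a b μ π := by
  obtain ⟨y, hy⟩ := Function.ne_iff.mp hne
  intro h
  have := add_mul_mixture (μ := μ) (π := π) hab y
  rw [← h] at this
  exact hy (mul_left_cancel₀ hb (by linarith))

lemma KL_mixture [Fintype Y] {p : Y → ℝ} (ha : 0 ≤ a) (hb : 0 ≤ b) (hab : 0 < a + b)
    (hμ : ∀ y, 0 < μ y) (hπ : ∀ y, 0 < π y) (hp : ∀ y, 0 < p y) :
    a * KL μ p + b * KL π p =
      a * KL μ (mixture a b μ π) + b * KL π (mixture a b μ π) +
        (a + b) * KL (mixture a b μ π) p := by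
  simp only [KL, mul_sum, ← sum_add_distrib]
  refine sum_congr rfl fun y _ => ?_
  have hm := mixture_pos ha hb hab hμ hπ y
  rw [Real.log_div (hμ y).ne' (hp y).ne', Real.log_div (hπ y).ne' (hp y).ne',
    Real.log_div (hμ y).ne' hm.ne', Real.log_div (hπ y).ne' hm.ne',
    Real.log_div hm.ne' (hp y).ne']
  linear_combination (Real.log (p y) - Real.log (mixture a b μ π y)) *
    add_mul_mixture (μ := μ) (π := π) hab.ne' y

end Mixture

theorem eta_pos {Y : Type*} [Fintype Y] (μ π : Y → ℝ)
    (hμ : IsPMF μ) (hπ : IsPMF π) (hμpos : ∀ y, 0 < μ y) (hπpos : ∀ y, 0 < π y)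
    (hne : μ ≠ π) (k : ℕ) (hk : 1 ≤ k) :
    0 < sInf {x : ℝ | ∃ p : Y → ℝ, IsPMF p ∧ (∀ y, 0 < p y) ∧
      x = (k : ℝ) * KL μ p + KL π p} := by
  have hk₀ : (0 : ℝ) < k := by exact_mod_cast hk
  have hk₁ : (0 : ℝ) < k + 1 := by positivity
  set m := mixture (k : ℝ) 1 μ π
  have hm : IsPMF m := isPMF_mixture hk₀.le zero_le_one hk₁ hμ hπ
  have hmpos : ∀ y, 0 < m y := mixture_pos hk₀.le zero_le_one hk₁ hμpos hπpos
  have hgap : 0 < (k : ℝ) * KL μ m + KL π m :=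
    add_pos_of_pos_of_nonneg
      (mul_pos hk₀ (KL_pos hμ hm hmpos (ne_mixture_left one_ne_zero hk₁.ne' hne)))
      (KL_nonneg hπ hm hmpos)
  refine hgap.trans_le (le_csInf ⟨_, π, hπ, hπpos, rfl⟩ ?_)
  rintro _ ⟨p, hp, hppos, rfl⟩
  have hcomp := KL_mixture hk₀.le zero_le_one hk₁ hμpos hπpos hppos
  rw [one_mul, one_mul] at hcomp
  rw [hcomp]
  exact le_add_of_nonneg_right (mul_nonneg hk₁.le (KL_nonneg hm hp hppos))
end

section
/- Pinsker-type separation for the outlier exponent: for probability distributions μ ≠ π on a finite alphabet with full support and k ≥ 1, η_k(μ‖π) := inf_p [k·D(μ‖p) + D(π‖p)] satisfies η_k(μ‖π) ≥ (2k/(k+1))·(d_TV(μ,π))², where d_TV is the total variation distance; in particular η_k(μ‖π) ≥ (d_TV(μ,π))². -/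
open Finset
open scoped Classical

/-! Pinsker's inequality gives `k D(μ‖p) + D(π‖p) ≥ 2 k a² + 2 b²` with `a = d_TV(μ, p)`,
`b = d_TV(π, p)`. Since `(k + 1)(k a² + b²) - k (a + b)² = (k a - b)²` and `a + b ≥ d_TV(μ, π)`,
this is at least `2k/(k+1) · d_TV(μ, π)²` for every `p`.

Pinsker's inequality itself comes from the pointwise bound `3 (x - 1)² ≤ 2 (x + 2) klFun x` and
Sedrakyan's form of Cauchy–Schwarz with the weights `p + 2q`, which sum to `3`. -/

open InformationTheory

lemma monotoneOn_add_one_mul_log_sub :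
    MonotoneOn (fun x ↦ (x + 1) * Real.log x - 2 * (x - 1)) (Set.Ioi 0) := by
  refine monotoneOn_of_hasDerivWithinAt_nonneg (f' := fun x ↦ Real.log x + x⁻¹ - 1) (convex_Ioi 0)
    (fun x hx ↦ ?_) (fun x hx ↦ ?_) (fun x hx ↦ ?_)
  · have hx : x ≠ 0 := (Set.mem_Ioi.mp hx).ne'
    fun_prop (disch := exact hx)
  · rw [interior_Ioi] at hx
    have hx : x ≠ 0 := (Set.mem_Ioi.mp hx).ne'
    refine HasDerivAt.hasDerivWithinAt ?_
    have h := (((hasDerivAt_id x).add_const 1).mul (Real.hasDerivAt_log hx)).sub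
      (((hasDerivAt_id x).sub_const 1).const_mul 2)
    refine h.congr_deriv ?_
    simp only [id]
    field_simp
    ring
  · rw [interior_Ioi] at hx
    linarith [Real.one_sub_inv_le_log_of_pos (Set.mem_Ioi.mp hx)]

lemma sq_sub_one_le_mul_klFun {x : ℝ} (hx : 0 ≤ x) : 3 * (x - 1) ^ 2 ≤ 2 * (x + 2) * klFun x := by
  set φ : ℝ → ℝ := fun x ↦ (x + 1) * Real.log x - 2 * (x - 1)
  set g : ℝ → ℝ := fun x ↦ 2 * (x + 2) * klFun x - 3 * (x - 1) ^ 2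
  have hg : Continuous g := by fun_prop (disch := exact continuous_klFun)
  have hderiv : ∀ y, y ≠ 0 → HasDerivAt g (4 * φ y) y := by
    intro y hy
    have h := ((((hasDerivAt_id y).add_const 2).const_mul 2).mul (hasDerivAt_klFun hy)).sub
      ((((hasDerivAt_id y).sub_const 1).pow 2).const_mul 3)
    refine h.congr_deriv ?_
    simp only [φ, klFun_apply, id]
    ring
  have hφ1 : φ 1 = 0 := by simp [φ]
  have hφ : MonotoneOn φ (Set.Ioi 0) := monotoneOn_add_one_mul_log_sub
  suffices g 1 ≤ g x by simpa [g, klFun_one] using this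
  rcases le_total x 1 with hx1 | hx1
  · refine antitoneOn_of_hasDerivWithinAt_nonpos (f' := fun y ↦ 4 * φ y) (convex_Icc 0 1)
      hg.continuousOn (fun y hy ↦ ?_) (fun y hy ↦ ?_) ⟨hx, hx1⟩ ⟨zero_le_one, le_rfl⟩ hx1
    · rw [interior_Icc] at hy
      exact (hderiv y hy.1.ne').hasDerivWithinAt
    · rw [interior_Icc] at hy
      have := hφ hy.1 (Set.mem_Ioi.mpr one_pos) hy.2.le
      linarith
  · refine monotoneOn_of_hasDerivWithinAt_nonneg (f' := fun y ↦ 4 * φ y) (convex_Ici 1)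
      hg.continuousOn (fun y hy ↦ ?_) (fun y hy ↦ ?_) (Set.mem_Ici.mpr le_rfl) hx1 hx1
    · rw [interior_Ici] at hy
      exact (hderiv y (one_pos.trans hy).ne').hasDerivWithinAt
    · rw [interior_Ici] at hy
      have := hφ (Set.mem_Ioi.mpr one_pos) (Set.mem_Ioi.mpr (one_pos.trans hy)) hy.le
      linarith

lemma sq_sub_div_le_mul_klFun {a b : ℝ} (ha : 0 ≤ a) (hb : 0 < b) :
    3 * (a - b) ^ 2 / (a + 2 * b) ≤ 2 * (b * klFun (a / b)) := by
  have h := sq_sub_one_le_mul_klFun (div_nonneg ha hb.le)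
  rw [div_le_iff₀ (by positivity)]
  calc 3 * (a - b) ^ 2 = b ^ 2 * (3 * (a / b - 1) ^ 2) := by field_simp
    _ ≤ b ^ 2 * (2 * (a / b + 2) * klFun (a / b)) := by gcongr
    _ = 2 * (b * klFun (a / b)) * (a + 2 * b) := by field_simp

section FiniteAlphabet

variable {Y : Type*} [Fintype Y]

noncomputable def tvDist (p q : Y → ℝ) : ℝ := (1 / 2) * ∑ y, |p y - q y|

lemma tvDist_comm (p q : Y → ℝ) : tvDist p q = tvDist q p := by
  simp only [tvDist, abs_sub_comm]

lemma tvDist_triangle (p q r : Y → ℝ) : tvDist p r ≤ tvDist p q + tvDist q r := by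
  simp only [tvDist, ← mul_add, ← sum_add_distrib]
  gcongr
  exact abs_sub_le _ _ _

lemma KL_eq_sum_mul_klFun {p q : Y → ℝ} (hp : IsPMF p) (hq : IsPMF q) (hq0 : ∀ y, 0 < q y) :
    KL p q = ∑ y, q y * klFun (p y / q y) := by
  have h : ∀ y, q y * klFun (p y / q y) = p y * Real.log (p y / q y) + q y - p y := fun y ↦ by
    have := (hq0 y).ne'
    rw [klFun_apply]
    field_simp
  simp only [h, sum_sub_distrib, sum_add_distrib, hp.2, hq.2, KL]
  ring

/-- Pinsker's inequality. -/
theorem two_mul_tvDist_sq_le_KL {p q : Y → ℝ} (hp : IsPMF p) (hq : IsPMF q) (hq0 : ∀ y, 0 < q y) :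
    2 * tvDist p q ^ 2 ≤ KL p q := by
  have hw : ∀ y, 0 < p y + 2 * q y := fun y ↦ by linarith [hp.1 y, hq0 y]
  have hw_sum : ∑ y, (p y + 2 * q y) = 3 := by
    rw [sum_add_distrib, ← mul_sum, hp.2, hq.2]; norm_num
  have sedrakyan := sq_sum_div_le_sum_sq_div univ (fun y ↦ |p y - q y|) (fun y _ ↦ hw y)
  have pointwise : ∑ y, 3 * |p y - q y| ^ 2 / (p y + 2 * q y) ≤ 2 * KL p q := by
    rw [KL_eq_sum_mul_klFun hp hq hq0, mul_sum]
    gcongr with y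
    rw [sq_abs]
    exact sq_sub_div_le_mul_klFun (hp.1 y) (hq0 y)
  simp only [mul_div_assoc, ← mul_sum, hw_sum] at sedrakyan pointwise
  rw [tvDist]
  nlinarith

lemma two_mul_div_add_one_mul_tvDist_sq_le {μ π p : Y → ℝ} (hμ : IsPMF μ) (hπ : IsPMF π)
    (hp : IsPMF p) (hp0 : ∀ y, 0 < p y) {k : ℝ} (hk : 0 ≤ k) :
    2 * k / (k + 1) * tvDist μ π ^ 2 ≤ k * KL μ p + KL π p := by
  have hμp := two_mul_tvDist_sq_le_KL hμ hp hp0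
  have hπp := two_mul_tvDist_sq_le_KL hπ hp hp0
  have htri : tvDist μ π ≤ tvDist μ p + tvDist π p :=
    tvDist_comm π p ▸ tvDist_triangle μ p π
  have htv : 0 ≤ tvDist μ π := by unfold tvDist; positivity
  rw [div_mul_eq_mul_div, div_le_iff₀ (by positivity)]
  nlinarith [sq_nonneg (k * tvDist μ p - tvDist π p), mul_le_mul_of_nonneg_left hμp hk,
    pow_le_pow_left₀ htv htri 2]

end FiniteAlphabet

theorem eta_pinsker_separation_general {Y : Type*} [Fintype Y] (μ π : Y → ℝ)
    (hμ : IsPMF μ) (hπ : IsPMF π) (hμpos : ∀ y, 0 < μ y)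
    (k : ℕ) (hk : 1 ≤ k) :
    (2 * (k : ℝ) / ((k : ℝ) + 1)) * ((1 / 2) * ∑ y, |μ y - π y|) ^ 2 ≤
        sInf {x : ℝ | ∃ p : Y → ℝ, IsPMF p ∧ (∀ y, 0 < p y) ∧
          x = (k : ℝ) * KL μ p + KL π p} ∧
    ((1 / 2) * ∑ y, |μ y - π y|) ^ 2 ≤
        sInf {x : ℝ | ∃ p : Y → ℝ, IsPMF p ∧ (∀ y, 0 < p y) ∧
          x = (k : ℝ) * KL μ p + KL π p} := by
  have hk1 : (1 : ℝ) ≤ k := by exact_mod_cast hk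
  have hη : 2 * (k : ℝ) / (k + 1) * tvDist μ π ^ 2 ≤
      sInf {x : ℝ | ∃ p : Y → ℝ, IsPMF p ∧ (∀ y, 0 < p y) ∧ x = (k : ℝ) * KL μ p + KL π p} := by
    refine le_csInf ⟨_, μ, hμ, hμpos, rfl⟩ ?_
    rintro _ ⟨p, hp, hp0, rfl⟩
    exact two_mul_div_add_one_mul_tvDist_sq_le hμ hπ hp hp0 k.cast_nonneg
  have hcoeff : 1 ≤ 2 * (k : ℝ) / (k + 1) := by
    rw [le_div_iff₀ (by positivity)]
    linarith
  refine ⟨hη, le_trans ?_ hη⟩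
  exact le_mul_of_one_le_left (sq_nonneg _) hcoeff

theorem eta_pinsker_separation {Y : Type*} [Fintype Y] (μ π : Y → ℝ)
    (hμ : IsPMF μ) (hπ : IsPMF π) (hμpos : ∀ y, 0 < μ y) (hπpos : ∀ y, 0 < π y)
    (hne : μ ≠ π) (k : ℕ) (hk : 1 ≤ k) :
    (2 * (k : ℝ) / ((k : ℝ) + 1)) * ((1 / 2) * ∑ y, |μ y - π y|) ^ 2 ≤
        sInf {x : ℝ | ∃ p : Y → ℝ, IsPMF p ∧ (∀ y, 0 < p y) ∧
          x = (k : ℝ) * KL μ p + KL π p} ∧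
    ((1 / 2) * ∑ y, |μ y - π y|) ^ 2 ≤
        sInf {x : ℝ | ∃ p : Y → ℝ, IsPMF p ∧ (∀ y, 0 < p y) ∧
          x = (k : ℝ) * KL μ p + KL π p} :=
  eta_pinsker_separation_general μ π hμ hπ hμpos k hk
end
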